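/- arXiv:2510.19192 — 2 statements merged into one kernel-verified Lean document; each statement's English description precedes it below -/
import Mathlib

section
/- Let τ > 0, let φⁿ ∈ ℝ with 0 ≤ φⁿ ≤ 1, let r ≤ 0 be a real number, and suppose φⁿ⁺¹ ∈ ℝ satisfies (φⁿ⁺¹ − φⁿ)/τ = φⁿ⁺¹ (1 − φⁿ) r. Then 0 ≤ φⁿ⁺¹ ≤ φⁿ ≤ 1; in particular, φⁿ⁺¹ ∈ [0, 1], and φⁿ⁺¹ is uniquely determined as φⁿ⁺¹ = φⁿ / (1 − τ (1 − φⁿ) r). -/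
/-- Bound preservation of the semi-implicit Allen–Cahn update in the case
`r ≤ 0`: if `0 ≤ φⁿ ≤ 1` and `(φⁿ⁺¹ − φⁿ)/τ = φⁿ⁺¹ (1 − φⁿ) r`, then
`0 ≤ φⁿ⁺¹ ≤ φⁿ ≤ 1` and `φⁿ⁺¹ = φⁿ / (1 − τ (1 − φⁿ) r)`. -/
theorem allen_cahn_update_nonpos (τ φn φn1 r : ℝ) (hτ : 0 < τ)
    (h0 : 0 ≤ φn) (h1 : φn ≤ 1) (hr : r ≤ 0)
    (heq : (φn1 - φn) / τ = φn1 * (1 - φn) * r) :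
    0 ≤ φn1 ∧ φn1 ≤ φn ∧ φn ≤ 1 ∧ φn1 = φn / (1 - τ * (1 - φn) * r) := by
  have hD : 1 ≤ 1 - τ * (1 - φn) * r := by nlinarith [mul_nonneg (mul_nonneg hτ.le (by linarith : (0:ℝ) ≤ 1 - φn)) (neg_nonneg.mpr hr)]
  have hD0 : 0 < 1 - τ * (1 - φn) * r := by linarith
  have key : φn1 * (1 - τ * (1 - φn) * r) = φn := by
    have := (div_eq_iff hτ.ne').mp heq
    nlinarith
  have hval : φn1 = φn / (1 - τ * (1 - φn) * r) := by
    field_simp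
    linarith [key]
  have h1' : 0 ≤ φn1 := by
    rw [hval]; positivity
  have h2 : φn1 ≤ φn := by
    rw [hval]
    calc φn / (1 - τ * (1 - φn) * r) ≤ φn / 1 := by
          apply div_le_div_of_nonneg_left h0 one_pos hD
      _ = φn := div_one φn
  exact ⟨h1', h2, h1, hval⟩
end

section
/- Let τ > 0, let φⁿ ∈ ℝ with 0 ≤ φⁿ ≤ 1, let r > 0 be a real number, and suppose φⁿ⁺¹ ∈ ℝ satisfies (φⁿ⁺¹ − φⁿ)/τ = φⁿ (1 − φⁿ⁺¹) r. Then 0 ≤ φⁿ ≤ φⁿ⁺¹ ≤ 1; in particular, φⁿ⁺¹ ∈ [0, 1], and φⁿ⁺¹ is uniquely determined as φⁿ⁺¹ = φⁿ (1 + τ r) / (1 + τ φⁿ r). -/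
/-- Bound preservation of the semi-implicit Allen–Cahn update in the case
`r > 0`: if `0 ≤ φⁿ ≤ 1` and `(φⁿ⁺¹ − φⁿ)/τ = φⁿ (1 − φⁿ⁺¹) r`, then
`0 ≤ φⁿ ≤ φⁿ⁺¹ ≤ 1` and `φⁿ⁺¹ = φⁿ (1 + τ r) / (1 + τ φⁿ r)`. -/
theorem allen_cahn_update_pos (τ φn φn1 r : ℝ) (hτ : 0 < τ)
    (h0 : 0 ≤ φn) (h1 : φn ≤ 1) (hr : 0 < r)
    (heq : (φn1 - φn) / τ = φn * (1 - φn1) * r) :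
    0 ≤ φn ∧ φn ≤ φn1 ∧ φn1 ≤ 1 ∧ φn1 = φn * (1 + τ * r) / (1 + τ * φn * r) := by
  have hne : τ ≠ 0 := ne_of_gt hτ
  have key : φn1 - φn = τ * (φn * (1 - φn1) * r) := by
    field_simp at heq; linarith
  have hden : 0 < 1 + τ * φn * r := by positivity
  have hform : φn1 = φn * (1 + τ * r) / (1 + τ * φn * r) := by
    field_simp
    nlinarith [key]
  refine ⟨h0, ?_, ?_, hform⟩
  · rw [hform]
    rw [le_div_iff₀ hden]
    nlinarith [mul_nonneg (mul_nonneg hτ.le hr.le) (mul_nonneg h0 (sub_nonneg.2 h1))]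
  · rw [hform, div_le_one hden]
    nlinarith
end
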